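/- In a regular multigrid with d directions, there exist r ∈ ℝ⁺ and k_r ∈ ℕ such that for any two distinct directions i ≠ j and any multigrid vertex z, there is a vertex z' of type (i,j) (i.e., the intersection of an i-line and a j-line) whose Euclidean distance to z is at most r and whose graph distance to z is at most k_r. One may take r = 2·max_{i≠j} |ζ_i^⊥·ζ_j|^{-1} and k_r = 2(d−1)⌈r/2⌉. -/

import Mathlib

open Set

noncomputable section

/-- Scalar product on `ℂ ≅ ℝ²`: `z·w := Re(z * conj w)`. -/
def dotp (z w : ℂ) : ℝ := (z * (starRingEnd ℂ) w).re

/-- Orthogonal vector: `ζ^⊥ := iζ`. -/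
def perp (ζ : ℂ) : ℂ := Complex.I * ζ

/-- `z` lies on the grid `G(ζᵢ, γᵢ)`. -/
def onGrid {d : ℕ} (ζ : Fin d → ℂ) (γ : Fin d → ℝ) (i : Fin d) (z : ℂ) : Prop :=
  ∃ m : ℤ, dotp z (ζ i) - γ i = m

/-- A multigrid vertex: an intersection point of two grid lines of distinct directions. -/
def IsVertex {d : ℕ} (ζ : Fin d → ℂ) (γ : Fin d → ℝ) (z : ℂ) : Prop :=
  ∃ i j : Fin d, i ≠ j ∧ onGrid ζ γ i z ∧ onGrid ζ γ j z

/-- The multigrid is regular: no point lies on grids of three distinct directions. -/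
def Regular {d : ℕ} (ζ : Fin d → ℂ) (γ : Fin d → ℝ) : Prop :=
  ∀ z : ℂ, Set.ncard {i : Fin d | onGrid ζ γ i z} ≤ 2

/-- `a` and `b` lie on a common line of the grid of direction `i`. -/
def SameLine {d : ℕ} (ζ : Fin d → ℂ) (γ : Fin d → ℝ) (i : Fin d) (a b : ℂ) : Prop :=
  onGrid ζ γ i a ∧ onGrid ζ γ i b ∧ ∃ t : ℝ, b - a = t • perp (ζ i)

/-- `c` lies strictly between `a` and `b` on the segment `[a,b]`. -/
def StrictBetween (a b c : ℂ) : Prop :=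
  ∃ t : ℝ, 0 < t ∧ t < 1 ∧ c = a + t • (b - a)

/-- The multigrid graph: vertices are the intersection points of grid lines, and two
vertices are adjacent when they are consecutive intersection points along a grid line. -/
def multigridGraph {d : ℕ} (ζ : Fin d → ℂ) (γ : Fin d → ℝ) : SimpleGraph ℂ where
  Adj a b := a ≠ b ∧ IsVertex ζ γ a ∧ IsVertex ζ γ b ∧
    ∃ i : Fin d, SameLine ζ γ i a b ∧
      ∀ c : ℂ, IsVertex ζ γ c → ¬ StrictBetween a b c
  symm := ⟨by
    rintro a b ⟨hab, ha, hb, i, ⟨hga, hgb, t, ht⟩, hno⟩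
    refine ⟨hab.symm, hb, ha, i, ⟨hgb, hga, -t, by rw [neg_smul, ← ht]; ring⟩, ?_⟩
    rintro c hc ⟨s, hs0, hs1, hcs⟩
    exact hno c hc ⟨1 - s, by linarith, by linarith, by rw [hcs]; module⟩⟩
  loopless := ⟨by rintro a ⟨h, _⟩; exact h rfl⟩

/-!
Starting from a vertex on a `k`-line, slide along that line to the nearest crossing with an
`m`-line: the `m`-coordinate changes at rate `ζ_k^⊥·ζ_m`, so the crossing is within
`|ζ_k^⊥·ζ_m|⁻¹ / 2`. The multigrid vertices passed on the way lie on lines of the other `d - 1`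
directions, and a segment of length `L` meets at most `⌈L⌉` lines of one (unit) direction, so
walking from vertex to consecutive vertex takes at most `(d - 1)⌈L⌉` edges. Two such slides (first
onto an `i`-line, then along it to a `j`-line) reach a vertex of type `(i,j)`.
-/

open scoped Interval

theorem dotp_apply (z w : ℂ) : dotp z w = z.re * w.re + z.im * w.im := by
  simp [dotp, Complex.mul_re]

theorem dotp_add_smul (z w v : ℂ) (t : ℝ) : dotp (z + t • w) v = dotp z v + t * dotp w v := by
  simp only [dotp_apply, Complex.add_re, Complex.add_im, Complex.real_smul, Complex.re_ofReal_mul,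
    Complex.im_ofReal_mul]
  ring

theorem dotp_perp_self (ζ : ℂ) : dotp (perp ζ) ζ = 0 := by
  simp only [dotp_apply, perp, Complex.mul_re, Complex.mul_im, Complex.I_re, Complex.I_im]
  ring

theorem abs_dotp_le (z w : ℂ) : |dotp z w| ≤ ‖z‖ * ‖w‖ :=
  (Complex.abs_re_le_norm _).trans_eq (by simp)

theorem norm_perp (ζ : ℂ) : ‖perp ζ‖ = ‖ζ‖ := by
  simp [perp]

theorem dotp_perp_ne_zero {ζ ζ' : ℂ} (hζ : ζ ≠ 0) (h : ∀ t : ℝ, ζ' ≠ t • ζ) :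
    dotp (perp ζ) ζ' ≠ 0 := by
  intro h0
  have hn : ζ.re ^ 2 + ζ.im ^ 2 ≠ 0 := by
    simpa [Complex.normSq_apply, sq] using Complex.normSq_pos.2 hζ |>.ne'
  simp only [dotp_apply, perp, Complex.mul_re, Complex.mul_im, Complex.I_re, Complex.I_im] at h0
  apply h (dotp ζ' ζ / (ζ.re ^ 2 + ζ.im ^ 2))
  apply Complex.ext <;>
    simp only [dotp_apply, Complex.real_smul, Complex.re_ofReal_mul, Complex.im_ofReal_mul] <;>
    field_simp
  · linear_combination -ζ.im * h0
  · linear_combination ζ.re * h0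

theorem Int.floor_sub_floor_le_ceil_sub {K : Type*} [Field K] [LinearOrder K]
    [IsStrictOrderedRing K] [FloorRing K] {a b : K} : ⌊b⌋ - ⌊a⌋ ≤ ⌈b - a⌉ := by
  rw [Int.le_ceil_iff]
  push_cast
  linarith [Int.floor_le b, Int.lt_floor_add_one a]

theorem encard_setOf_add_mul_eq_intCast_le {K : Type*} [Field K] [LinearOrder K]
    [IsStrictOrderedRing K] [FloorRing K] (x : K) {c : K} (hc : c ≠ 0) (a b : K) :
    {t ∈ Ι a b | ∃ m : ℤ, x + t * c = m}.encard ≤ ⌈|b - a| * |c|⌉₊ := by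
  wlog hab : a ≤ b generalizing a b
  · rw [uIoc_comm, abs_sub_comm]
    exact this b a (le_of_not_ge hab)
  wlog hc₀ : 0 < c generalizing x c
  · have hneg : {t ∈ Ι a b | ∃ m : ℤ, x + t * c = m} =
        {t ∈ Ι a b | ∃ m : ℤ, -x + t * -c = m} := by
      ext t
      refine and_congr_right fun _ => ⟨fun ⟨m, hm⟩ => ⟨-m, ?_⟩, fun ⟨m, hm⟩ => ⟨-m, ?_⟩⟩ <;>
        push_cast <;> linarith
    rw [hneg, ← abs_neg c]
    exact this (-x) (neg_ne_zero.2 hc) (neg_pos.2 (lt_of_le_of_ne (not_lt.1 hc₀) hc))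
  rw [uIoc_of_le hab, abs_of_nonneg (sub_nonneg.2 hab), abs_of_pos hc₀]
  set S := {t ∈ Ioc a b | ∃ m : ℤ, x + t * c = m}
  have hinj : InjOn (fun t => x + t * c) S := fun t _ t' _ h => by
    simpa [hc] using h
  have himage : (fun t => x + t * c) '' S ⊆ (Int.cast : ℤ → K) '' Ioc ⌊x + a * c⌋ ⌊x + b * c⌋ := by
    rintro _ ⟨t, ⟨⟨hat, htb⟩, m, hm⟩, rfl⟩
    refine ⟨m, ?_, hm.symm⟩
    rw [← Int.preimage_Ioc, mem_preimage, ← hm]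
    constructor <;> nlinarith
  calc S.encard = ((fun t => x + t * c) '' S).encard := hinj.encard_image.symm
    _ ≤ (Ioc ⌊x + a * c⌋ ⌊x + b * c⌋).encard := (encard_le_encard himage).trans (encard_image_le _ _)
    _ = (⌊x + b * c⌋ - ⌊x + a * c⌋).toNat := by
      rw [← Finset.coe_Ioc, encard_coe_eq_coe_finsetCard, Int.card_Ioc]
    _ ≤ ⌈(b - a) * c⌉₊ := by
      rw [← Int.ceil_toNat, Nat.cast_le]
      refine Int.toNat_le_toNat (Int.floor_sub_floor_le_ceil_sub.trans_eq ?_)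
      ring_nf

namespace SimpleGraph

variable {α β : Type*} [LinearOrder β] (G : SimpleGraph α) (f : β → α) (T : Set β)

theorem exists_walk_length_le_of_adj_consecutive
    (hadj : ∀ s ∈ T, ∀ t ∈ T, s < t → (∀ e ∈ Ioo s t, e ∉ T) → G.Adj (f s) (f t)) (n : ℕ) :
    ∀ s ∈ T, ∀ t ∈ T, s ≤ t → (T ∩ Ioc s t).encard ≤ n →
      ∃ w : G.Walk (f s) (f t), w.length ≤ n := by
  induction n with
  | zero =>
    intro s _ t ht hst hcard
    obtain rfl : s = t := by
      refine hst.antisymm (not_lt.1 fun hlt => ?_)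
      exact encard_ne_zero.2 (show (T ∩ Ioc s t).Nonempty from ⟨t, ht, hlt, le_rfl⟩)
        (by simpa using hcard)
    exact ⟨Walk.nil, le_rfl⟩
  | succ n ih =>
    intro s hs t ht hst hcard
    obtain rfl | hlt := hst.eq_or_lt
    · exact ⟨Walk.nil, Nat.zero_le _⟩
    obtain ⟨c, ⟨hcT, hsc, hct⟩, hmin⟩ := exists_min_image (T ∩ Ioc s t) id
      (finite_of_encard_le_coe hcard) ⟨t, ht, hlt, le_rfl⟩
    have hgap : ∀ e ∈ Ioo s c, e ∉ T := fun e ⟨hse, hec⟩ heT =>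
      (hmin e ⟨heT, hse, hec.le.trans hct⟩).not_gt hec
    have hrest : T ∩ Ioc c t ⊆ (T ∩ Ioc s t) \ {c} := fun e ⟨heT, hce, het⟩ =>
      ⟨⟨heT, hsc.trans hce, het⟩, hce.ne'⟩
    have hcard' : (T ∩ Ioc c t).encard ≤ n := by
      have := encard_sdiff_singleton_add_one (show c ∈ T ∩ Ioc s t from ⟨hcT, hsc, hct⟩)
      rw [← this, Nat.cast_succ, ENat.add_le_add_iff_right ENat.one_ne_top] at hcard
      exact (encard_le_encard hrest).trans hcard
    obtain ⟨w, hw⟩ := ih c hcT t ht hct hcard'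
    exact ⟨Walk.cons (hadj s hs c hcT hsc hgap) w, by simpa using hw⟩

theorem exists_walk_length_le_of_adj_consecutive_uIoc
    (hadj : ∀ s ∈ T, ∀ t ∈ T, s < t → (∀ e ∈ Ioo s t, e ∉ T) → G.Adj (f s) (f t))
    {s t : β} (hs : s ∈ T) (ht : t ∈ T) {n : ℕ} (hcard : (T ∩ Ι s t).encard ≤ n) :
    ∃ w : G.Walk (f s) (f t), w.length ≤ n := by
  rcases le_total s t with hst | hts
  · rw [uIoc_of_le hst] at hcard
    exact G.exists_walk_length_le_of_adj_consecutive f T hadj n s hs t ht hst hcard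
  · rw [uIoc_of_ge hts] at hcard
    obtain ⟨w, hw⟩ := G.exists_walk_length_le_of_adj_consecutive f T hadj n t ht s hs hts hcard
    exact ⟨w.reverse, by simpa using hw⟩

end SimpleGraph

section Multigrid

variable {d : ℕ} {ζ : Fin d → ℂ} {γ : Fin d → ℝ}

theorem onGrid_add_smul_perp {k : Fin d} {p : ℂ} (hp : onGrid ζ γ k p) (t : ℝ) :
    onGrid ζ γ k (p + t • perp (ζ k)) := by
  obtain ⟨m, hm⟩ := hp
  exact ⟨m, by rw [dotp_add_smul, dotp_perp_self, mul_zero, add_zero, hm]⟩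

theorem multigridGraph_adj_add_smul_perp {k : Fin d} (hk : ζ k ≠ 0) {p : ℂ}
    (hp : onGrid ζ γ k p) {s t : ℝ} (hst : s < t) (hs : IsVertex ζ γ (p + s • perp (ζ k)))
    (ht : IsVertex ζ γ (p + t • perp (ζ k)))
    (hgap : ∀ e ∈ Ioo s t, ¬IsVertex ζ γ (p + e • perp (ζ k))) :
    (multigridGraph ζ γ).Adj (p + s • perp (ζ k)) (p + t • perp (ζ k)) := by
  have hperp : perp (ζ k) ≠ 0 := mul_ne_zero Complex.I_ne_zero hk
  refine ⟨fun h => hst.ne (smul_left_injective ℝ hperp (add_left_cancel h)), hs, ht, k,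
    ⟨onGrid_add_smul_perp hp s, onGrid_add_smul_perp hp t, t - s, by module⟩, ?_⟩
  rintro c hc ⟨θ, hθ₀, hθ₁, rfl⟩
  refine hgap (s + θ * (t - s)) ⟨by nlinarith, by nlinarith⟩ ?_
  convert hc using 1
  module

theorem encard_isVertex_add_smul_perp_le (hunit : ∀ j, ‖ζ j‖ = 1)
    (hnonpar : ∀ j k : Fin d, j ≠ k → ∀ t : ℝ, ζ k ≠ t • ζ j) (k : Fin d) (p : ℂ) (u : ℝ) :
    ({t | IsVertex ζ γ (p + t • perp (ζ k))} ∩ Ι 0 u).encard ≤ ((d - 1) * ⌈|u|⌉₊ : ℕ) := by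
  set c : Fin d → ℝ := fun j => dotp (perp (ζ k)) (ζ j)
  have hcover : {t | IsVertex ζ γ (p + t • perp (ζ k))} ∩ Ι 0 u ⊆
      ⋃ j ∈ Finset.univ.erase k, {t ∈ Ι 0 u | ∃ m : ℤ, (dotp p (ζ j) - γ j) + t * c j = m} := by
    rintro t ⟨⟨i, j, hij, hi, hj⟩, ht⟩
    obtain ⟨l, hlk, m, hm⟩ : ∃ l, l ≠ k ∧ onGrid ζ γ l (p + t • perp (ζ k)) := by
      by_cases hik : i = k
      · exact ⟨j, hik ▸ hij.symm, hj⟩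
      · exact ⟨i, hik, hi⟩
    refine mem_biUnion (Finset.mem_erase.2 ⟨hlk, Finset.mem_univ l⟩) ⟨ht, m, ?_⟩
    rw [← hm, dotp_add_smul]
    ring
  have hcount : ∀ j ∈ Finset.univ.erase k,
      {t ∈ Ι 0 u | ∃ m : ℤ, (dotp p (ζ j) - γ j) + t * c j = m}.encard ≤ ⌈|u|⌉₊ := by
    intro j hj
    have hc : c j ≠ 0 :=
      dotp_perp_ne_zero (norm_ne_zero_iff.1 ((hunit k).trans_ne one_ne_zero))
        (hnonpar k j (Finset.ne_of_mem_erase hj).symm)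
    have hc₁ : |c j| ≤ 1 := (abs_dotp_le _ _).trans_eq (by rw [norm_perp, hunit, hunit, one_mul])
    refine (encard_setOf_add_mul_eq_intCast_le _ hc 0 u).trans ?_
    rw [sub_zero]
    exact_mod_cast Nat.ceil_mono (mul_le_of_le_one_right (abs_nonneg u) hc₁)
  calc _ ≤ _ := encard_le_encard hcover
    _ ≤ ∑ j ∈ Finset.univ.erase k, (⌈|u|⌉₊ : ℕ∞) :=
      (Finset.set_encard_biUnion_le _ _).trans (Finset.sum_le_sum hcount)
    _ = ((d - 1) * ⌈|u|⌉₊ : ℕ) := by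
      rw [Finset.sum_const, Finset.card_erase_of_mem (Finset.mem_univ k), Finset.card_univ,
        Fintype.card_fin, nsmul_eq_mul, Nat.cast_mul]

theorem exists_walk_to_crossing (hunit : ∀ j, ‖ζ j‖ = 1)
    (hnonpar : ∀ j k : Fin d, j ≠ k → ∀ t : ℝ, ζ k ≠ t • ζ j) {k m : Fin d} (hkm : k ≠ m)
    {p : ℂ} (hp : IsVertex ζ γ p) (hpk : onGrid ζ γ k p) {ρ : ℝ}
    (hρ : |dotp (perp (ζ k)) (ζ m)|⁻¹ ≤ ρ) :
    ∃ q, onGrid ζ γ k q ∧ onGrid ζ γ m q ∧ dist p q ≤ ρ / 2 ∧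
      ∃ w : (multigridGraph ζ γ).Walk p q, w.length ≤ (d - 1) * ⌈ρ / 2⌉₊ := by
  have hk : ζ k ≠ 0 := norm_ne_zero_iff.1 ((hunit k).trans_ne one_ne_zero)
  set c := dotp (perp (ζ k)) (ζ m)
  have hc : c ≠ 0 := dotp_perp_ne_zero hk (hnonpar k m hkm)
  set x := dotp p (ζ m) - γ m with hx
  -- moving by `u` along the `k`-line shifts the `m`-coordinate by `u * c`, onto `round x`
  set u := (round x - x) / c
  have hu : |u| ≤ ρ / 2 := by
    rw [abs_div, div_eq_mul_inv, abs_sub_comm]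
    calc |x - round x| * |c|⁻¹ ≤ 1 / 2 * ρ :=
          mul_le_mul (abs_sub_round x) hρ (inv_nonneg.2 (abs_nonneg c)) (by norm_num)
      _ = ρ / 2 := by ring
  set f : ℝ → ℂ := fun t => p + t • perp (ζ k)
  have hgrid : onGrid ζ γ m (f u) :=
    ⟨round x, by rw [dotp_add_smul, div_mul_cancel₀ _ hc, hx]; ring⟩
  refine ⟨f u, onGrid_add_smul_perp hpk u, hgrid, ?_, ?_⟩
  · rw [dist_comm, dist_eq_norm, add_sub_cancel_left, norm_smul, norm_perp, hunit, mul_one]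
    exact hu
  · have hcard := (encard_isVertex_add_smul_perp_le hunit hnonpar k p u (γ := γ)).trans
      (Nat.cast_le.2 (Nat.mul_le_mul_left (d - 1) (Nat.ceil_mono hu)))
    obtain ⟨w, hw⟩ := (multigridGraph ζ γ).exists_walk_length_le_of_adj_consecutive_uIoc f
      {t | IsVertex ζ γ (f t)}
      (fun s hs t ht hst hgap => multigridGraph_adj_add_smul_perp hk hpk hst hs ht hgap)
      (show IsVertex ζ γ (f 0) by simpa [f] using hp) ⟨k, m, hkm, onGrid_add_smul_perp hpk u, hgrid⟩
      hcard
    exact ⟨w.copy (by simp [f]) rfl, by simpa using hw⟩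

theorem exists_walk_to_grid (hunit : ∀ j, ‖ζ j‖ = 1)
    (hnonpar : ∀ j k : Fin d, j ≠ k → ∀ t : ℝ, ζ k ≠ t • ζ j) {ρ : ℝ}
    (hρ : ∀ i j, i ≠ j → |dotp (perp (ζ i)) (ζ j)|⁻¹ ≤ ρ) (i : Fin d) {z : ℂ}
    (hz : IsVertex ζ γ z) :
    ∃ q, IsVertex ζ γ q ∧ onGrid ζ γ i q ∧ dist z q ≤ ρ / 2 ∧
      ∃ w : (multigridGraph ζ γ).Walk z q, w.length ≤ (d - 1) * ⌈ρ / 2⌉₊ := by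
  obtain ⟨i₀, j₀, hij₀, hi₀, hj₀⟩ := hz
  by_cases hi : onGrid ζ γ i z
  · have hρ₀ : 0 ≤ ρ := (inv_nonneg.2 (abs_nonneg _)).trans (hρ i₀ j₀ hij₀)
    exact ⟨z, ⟨i₀, j₀, hij₀, hi₀, hj₀⟩, hi, by rw [dist_self]; linarith, .nil, Nat.zero_le _⟩
  have hi₀i : i₀ ≠ i := by rintro rfl; exact hi hi₀
  obtain ⟨q, hqi₀, hqi, hdist, hwalk⟩ :=
    exists_walk_to_crossing hunit hnonpar hi₀i ⟨i₀, j₀, hij₀, hi₀, hj₀⟩ hi₀ (hρ i₀ i hi₀i)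
  exact ⟨q, ⟨i₀, i, hi₀i, hqi₀, hqi⟩, hqi, hdist, hwalk⟩

end Multigrid

theorem multigrid_bounded_distance_general {d : ℕ} (ζ : Fin d → ℂ) (γ : Fin d → ℝ)
    (hunit : ∀ j, ‖ζ j‖ = 1)
    (hnonpar : ∀ j k : Fin d, j ≠ k → ∀ t : ℝ, ζ k ≠ t • ζ j) :
    ∃ (r : ℝ) (k_r : ℕ),
      r = 2 * (⨆ p : {p : Fin d × Fin d // p.1 ≠ p.2}, |dotp (perp (ζ p.1.1)) (ζ p.1.2)|⁻¹) ∧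
      k_r = 2 * (d - 1) * ⌈r / 2⌉₊ ∧
      ∀ i j : Fin d, i ≠ j → ∀ z : ℂ, IsVertex ζ γ z →
        ∃ z' : ℂ, onGrid ζ γ i z' ∧ onGrid ζ γ j z' ∧
          dist z z' ≤ r ∧ (multigridGraph ζ γ).dist z z' ≤ k_r := by
  set ρ := ⨆ p : {p : Fin d × Fin d // p.1 ≠ p.2}, |dotp (perp (ζ p.1.1)) (ζ p.1.2)|⁻¹
  have hρ : ∀ i j, i ≠ j → |dotp (perp (ζ i)) (ζ j)|⁻¹ ≤ ρ := fun i j hij =>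
    le_ciSup (f := fun p : {p : Fin d × Fin d // p.1 ≠ p.2} => |dotp (perp (ζ p.1.1)) (ζ p.1.2)|⁻¹)
      (finite_range _).bddAbove ⟨(i, j), hij⟩
  refine ⟨2 * ρ, _, rfl, rfl, fun i j hij z hz => ?_⟩
  obtain ⟨q₁, hq₁, hq₁i, hzq₁, w₁, hw₁⟩ := exists_walk_to_grid hunit hnonpar hρ i hz
  obtain ⟨q₂, hq₂i, hq₂j, hq₁q₂, w₂, hw₂⟩ :=
    exists_walk_to_crossing hunit hnonpar hij hq₁ hq₁i (hρ i j hij)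
  have hρ₀ : 0 ≤ ρ := (inv_nonneg.2 (abs_nonneg _)).trans (hρ i j hij)
  refine ⟨q₂, hq₂i, hq₂j, by linarith [dist_triangle z q₁ q₂], ?_⟩
  calc (multigridGraph ζ γ).dist z q₂ ≤ (w₁.append w₂).length := SimpleGraph.dist_le _
    _ ≤ 2 * (d - 1) * ⌈ρ / 2⌉₊ := by rw [SimpleGraph.Walk.length_append]; linarith
    _ ≤ 2 * (d - 1) * ⌈2 * ρ / 2⌉₊ := Nat.mul_le_mul_left _ (Nat.ceil_mono (by linarith))

/-- Relative density of crossings of a given type: in a regular multigrid with `d ≥ 2`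
pairwise non-parallel unit directions, there are `r ∈ ℝ⁺` and `k_r ∈ ℕ` such that for any
distinct directions `i ≠ j` and any multigrid vertex `z`, some vertex `z'` of type `(i,j)`
is at Euclidean distance at most `r` and graph distance at most `k_r` from `z`.  One may
take `r = 2·max_{i≠j} |ζᵢ^⊥·ζⱼ|⁻¹` and `k_r = 2(d−1)⌈r/2⌉`. -/
theorem multigrid_bounded_distance {d : ℕ} (ζ : Fin d → ℂ) (γ : Fin d → ℝ)
    (hd : 2 ≤ d)
    (hunit : ∀ j, ‖ζ j‖ = 1)
    (hnonpar : ∀ j k : Fin d, j ≠ k → ∀ t : ℝ, ζ k ≠ t • ζ j)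
    (hreg : Regular ζ γ) :
    ∃ (r : ℝ) (k_r : ℕ),
      r = 2 * (⨆ p : {p : Fin d × Fin d // p.1 ≠ p.2}, |dotp (perp (ζ p.1.1)) (ζ p.1.2)|⁻¹) ∧
      k_r = 2 * (d - 1) * ⌈r / 2⌉₊ ∧
      ∀ i j : Fin d, i ≠ j → ∀ z : ℂ, IsVertex ζ γ z →
        ∃ z' : ℂ, onGrid ζ γ i z' ∧ onGrid ζ γ j z' ∧
          dist z z' ≤ r ∧ (multigridGraph ζ γ).dist z z' ≤ k_r :=
  multigrid_bounded_distance_general ζ γ hunit hnonpar
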